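/- arXiv:2110.12751 — 3 statements merged into one kernel-verified Lean document; each statement's English description precedes it below -/
import Mathlib

section
/- Suppose the noise density p is symmetric with Fourier transform p̂ that is real, nonnegative, and satisfies p̂(ξ) ≥ C₀ > 0 for |ξ| ≤ c₀. Then for σ > 0 and any b with |b| ≤ 2M, σ² ∫ [exp(-t²/σ²) - exp(-(t-b)²/σ²)] p(t) dt ≥ c_σ · b², where c_σ = (σ³/π^{5/2}) · C₀ · ∫_{-c'}^{c'} ξ² exp(-σ²ξ²/4) dξ and c' = min(c₀, π/(2M)). -/
/-!
Writing each Gaussian as the inverse Fourier transform of a Gaussian and applying Fubini,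
the gap becomes `σ / (2√π) ∫ exp (-σ²ξ²/4) (1 - cos (bξ)) p̂(ξ) dξ`. Its integrand is
nonnegative, so it dominates the integral over `|ξ| ≤ min c₀ (π / (2M))`, where `|bξ| ≤ π`
gives Jordan's bound `1 - cos (bξ) ≥ 2 (bξ)² / π²` and `p̂ ≥ C₀`.
-/

open MeasureTheory Real Complex

def HasRealFourierTransform (p phat : ℝ → ℝ) : Prop :=
  ∀ ξ : ℝ, (phat ξ : ℂ) = ∫ t : ℝ, cexp (-(I * ξ * t)) * (p t : ℂ)

lemma integral_exp_neg_mul_sq_mul_cos {s : ℝ} (hs : 0 < s) (x : ℝ) :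
    ∫ ξ, Real.exp (-s * ξ ^ 2) * Real.cos (x * ξ) = √(π / s) * Real.exp (-x ^ 2 / (4 * s)) := by
  have hs' : 0 < (s : ℂ).re := by simpa using hs
  have hint : Integrable fun ξ : ℝ => cexp (I * x * ξ) * cexp (-s * ξ ^ 2) := by
    refine (integrable_cexp_neg_mul_sq hs').bdd_mul (c := 1) (by fun_prop) (ae_of_all _ fun ξ => ?_)
    rw [Complex.norm_exp]; simp
  have h := (integral_re hint).trans (congrArg Complex.re (fourierIntegral_gaussian hs' x))
  convert h using 1
  · congr 1 with ξ
    rw [← Complex.exp_add, RCLike.re_to_complex, Complex.exp_re]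
    simp only [add_re, add_im, mul_re, mul_im, neg_re, neg_im, ← ofReal_pow, ofReal_re, ofReal_im,
      I_re, I_im]
    ring_nf
  · have hexp : -(x : ℂ) ^ 2 / (4 * s) = ((-x ^ 2 / (4 * s) : ℝ) : ℂ) := by push_cast; ring
    rw [hexp, ← ofReal_exp, ← ofReal_div, show (1 / 2 : ℂ) = ((1 / 2 : ℝ) : ℂ) by norm_num,
      ← ofReal_cpow (by positivity), ← ofReal_mul, ofReal_re, sqrt_eq_rpow]

lemma exp_neg_sq_div_sq_eq_integral {σ : ℝ} (hσ : 0 < σ) (x : ℝ) :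
    Real.exp (-x ^ 2 / σ ^ 2)
      = σ / (2 * √π) * ∫ ξ, Real.exp (-(σ ^ 2 * ξ ^ 2) / 4) * Real.cos (x * ξ) := by
  have h := integral_exp_neg_mul_sq_mul_cos (s := σ ^ 2 / 4) (by positivity) x
  have hsqrt : √(π / (σ ^ 2 / 4)) = 2 * √π / σ := by
    rw [show π / (σ ^ 2 / 4) = π / (σ / 2) ^ 2 by ring, sqrt_div' _ (sq_nonneg _),
      sqrt_sq (by positivity)]
    ring
  simp_rw [show ∀ ξ : ℝ, -(σ ^ 2 * ξ ^ 2) / 4 = -(σ ^ 2 / 4) * ξ ^ 2 from fun ξ => by ring, h,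
    hsqrt]
  field_simp

lemma integrable_exp_neg_sq_mul_sq_div_four {σ : ℝ} (hσ : 0 < σ) :
    Integrable fun ξ : ℝ => Real.exp (-(σ ^ 2 * ξ ^ 2) / 4) := by
  simpa only [neg_mul, mul_div_right_comm, neg_div] using
    integrable_exp_neg_mul_sq (b := σ ^ 2 / 4) (by positivity)

lemma integral_cos_sub_mul_eq {p phat : ℝ → ℝ} (hp : Integrable p)
    (hphat : HasRealFourierTransform p phat) (c ξ : ℝ) :
    ∫ t, Real.cos ((t - c) * ξ) * p t = Real.cos (c * ξ) * phat ξ := by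
  have hint : Integrable fun t : ℝ => cexp (-(I * ξ * t)) * (p t : ℂ) := by
    refine hp.ofReal.bdd_mul (c := 1) (by fun_prop) (ae_of_all _ fun t => ?_)
    rw [Complex.norm_exp]; simp
  have hparts (t : ℝ) : cexp (-(I * ξ * t)) * (p t : ℂ)
      = (Real.cos (ξ * t) * p t : ℝ) + (-(Real.sin (ξ * t) * p t) : ℝ) * I := by
    rw [show -(I * ξ * t) = ((-(ξ * t) : ℝ) : ℂ) * I by push_cast; ring, exp_mul_I]
    push_cast [Complex.cos_neg, Complex.sin_neg]
    ring
  have hcos : ∫ t, Real.cos (ξ * t) * p t = phat ξ := by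
    have h := (integral_re hint).trans (congrArg Complex.re (hphat ξ)).symm
    simpa only [hparts, RCLike.re_to_complex, add_re, ofReal_re, re_ofReal_mul, I_re, mul_zero,
      add_zero] using h
  -- the Fourier transform is real, so the sine transform vanishes
  have hsin : ∫ t, Real.sin (ξ * t) * p t = 0 := by
    have h := (integral_im hint).trans (congrArg Complex.im (hphat ξ)).symm
    simpa only [hparts, RCLike.im_to_complex, add_im, ofReal_im, im_ofReal_mul, I_im, mul_one,
      zero_add, integral_neg, neg_eq_zero] using h
  have hbdd {f : ℝ → ℝ} (hf : Continuous f) (hf1 : ∀ t, |f t| ≤ 1) :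
      Integrable fun t => f t * p t :=
    hp.bdd_mul hf.aestronglyMeasurable (ae_of_all _ fun t => hf1 t)
  calc ∫ t, Real.cos ((t - c) * ξ) * p t
      = ∫ t, Real.cos (ξ * t) * p t * Real.cos (c * ξ)
          + Real.sin (ξ * t) * p t * Real.sin (c * ξ) := by
        congr 1 with t
        rw [sub_mul, mul_comm t, Real.cos_sub]; ring
    _ = Real.cos (c * ξ) * phat ξ := by
        rw [integral_add ((hbdd (by fun_prop) fun t => abs_cos_le_one _).mul_const _)
          ((hbdd (by fun_prop) fun t => abs_sin_le_one _).mul_const _), integral_mul_const,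
          integral_mul_const, hcos, hsin]
        ring

lemma integrable_mul_cos_sub_mul_prod {w p : ℝ → ℝ} (hw : Integrable w) (hp : Integrable p)
    (c : ℝ) :
    Integrable (fun z : ℝ × ℝ => w z.2 * Real.cos ((z.1 - c) * z.2) * p z.1)
      (volume.prod volume) := by
  refine (hp.norm.mul_prod hw.norm).mono' ?_ (ae_of_all _ fun z => ?_)
  · exact (hw.1.comp_snd.mul (by fun_prop : Continuous _).aestronglyMeasurable).mul hp.1.comp_fst
  · rw [norm_mul, norm_mul, mul_comm]
    gcongr
    exact mul_le_of_le_one_right (norm_nonneg _) (abs_cos_le_one _)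

lemma integral_mul_cos_sub_mul_eq {w p phat : ℝ → ℝ} (hp : Integrable p)
    (hphat : HasRealFourierTransform p phat) (c ξ : ℝ) :
    ∫ t, w ξ * Real.cos ((t - c) * ξ) * p t = w ξ * Real.cos (c * ξ) * phat ξ := by
  simp_rw [mul_assoc]
  rw [integral_const_mul, integral_cos_sub_mul_eq hp hphat]

lemma integrable_mul_cos_mul_fourier {w p phat : ℝ → ℝ} (hw : Integrable w) (hp : Integrable p)
    (hphat : HasRealFourierTransform p phat) (c : ℝ) :
    Integrable fun ξ => w ξ * Real.cos (c * ξ) * phat ξ := by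
  simpa only [integral_mul_cos_sub_mul_eq hp hphat] using
    (integrable_mul_cos_sub_mul_prod hw hp c).integral_prod_right

lemma integral_integral_mul_cos_sub_mul {w p phat : ℝ → ℝ} (hw : Integrable w) (hp : Integrable p)
    (hphat : HasRealFourierTransform p phat) (c : ℝ) :
    ∫ t, (∫ ξ, w ξ * Real.cos ((t - c) * ξ)) * p t = ∫ ξ, w ξ * Real.cos (c * ξ) * phat ξ := by
  simp_rw [← integral_mul_const]
  rw [integral_integral_swap (integrable_mul_cos_sub_mul_prod hw hp c)]
  simp_rw [integral_mul_cos_sub_mul_eq hp hphat]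

lemma integrable_mul_one_sub_cos_mul_fourier {w p phat : ℝ → ℝ} (hw : Integrable w)
    (hp : Integrable p) (hphat : HasRealFourierTransform p phat) (b : ℝ) :
    Integrable fun ξ => w ξ * ((1 - Real.cos (b * ξ)) * phat ξ) := by
  have h0 := integrable_mul_cos_mul_fourier hw hp hphat 0
  simp only [zero_mul, Real.cos_zero, mul_one] at h0
  refine (h0.sub (integrable_mul_cos_mul_fourier hw hp hphat b)).congr (ae_of_all _ fun ξ => ?_)
  simp only [Pi.sub_apply]
  ring

lemma integral_exp_neg_sub_sq_div_mul_eq {σ : ℝ} (hσ : 0 < σ) {p phat : ℝ → ℝ}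
    (hp : Integrable p) (hphat : HasRealFourierTransform p phat) (c : ℝ) :
    ∫ t, Real.exp (-(t - c) ^ 2 / σ ^ 2) * p t
      = σ / (2 * √π) * ∫ ξ, Real.exp (-(σ ^ 2 * ξ ^ 2) / 4) * Real.cos (c * ξ) * phat ξ := by
  calc ∫ t, Real.exp (-(t - c) ^ 2 / σ ^ 2) * p t
      = ∫ t, σ / (2 * √π) *
          ((∫ ξ, Real.exp (-(σ ^ 2 * ξ ^ 2) / 4) * Real.cos ((t - c) * ξ)) * p t) := by
        simp_rw [exp_neg_sq_div_sq_eq_integral hσ, mul_assoc]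
    _ = _ := by
        rw [integral_const_mul,
          integral_integral_mul_cos_sub_mul (integrable_exp_neg_sq_mul_sq_div_four hσ) hp hphat]

lemma integral_gaussian_sub_shift_mul_eq {σ : ℝ} (hσ : 0 < σ) {p phat : ℝ → ℝ}
    (hp : Integrable p) (hphat : HasRealFourierTransform p phat) (b : ℝ) :
    ∫ t, (Real.exp (-(t ^ 2) / σ ^ 2) - Real.exp (-((t - b) ^ 2) / σ ^ 2)) * p t
      = σ / (2 * √π) *
        ∫ ξ, Real.exp (-(σ ^ 2 * ξ ^ 2) / 4) * ((1 - Real.cos (b * ξ)) * phat ξ) := by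
  have hbdd (c : ℝ) : Integrable fun t => Real.exp (-(t - c) ^ 2 / σ ^ 2) * p t :=
    hp.bdd_mul (c := 1) (by fun_prop) (ae_of_all _ fun t => by
      rw [norm_of_nonneg (Real.exp_nonneg _), Real.exp_le_one_iff]
      exact div_nonpos_of_nonpos_of_nonneg (neg_nonpos.mpr (sq_nonneg _)) (sq_nonneg _))
  have hw := integrable_exp_neg_sq_mul_sq_div_four hσ
  have hb0 := hbdd 0
  have h0 := integral_exp_neg_sub_sq_div_mul_eq hσ hp hphat 0
  have hw0 := integrable_mul_cos_mul_fourier hw hp hphat 0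
  simp only [sub_zero, zero_mul, Real.cos_zero, mul_one] at hb0 h0 hw0
  simp_rw [sub_mul]
  rw [integral_sub hb0 (hbdd b), h0, integral_exp_neg_sub_sq_div_mul_eq hσ hp hphat b, ← mul_sub,
    ← integral_sub hw0 (integrable_mul_cos_mul_fourier hw hp hphat b)]
  congr 2 with ξ
  ring

lemma mul_sq_mul_le_one_sub_cos_mul {θ C a : ℝ} (hθ : |θ| ≤ π) (hCa : C ≤ a) (ha : 0 ≤ a) :
    2 / π ^ 2 * θ ^ 2 * C ≤ (1 - Real.cos θ) * a :=
  mul_le_mul_of_nonneg (by linarith [cos_le_one_sub_mul_cos_sq hθ]) hCa (by positivity) ha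

lemma le_integral_mul_one_sub_cos_mul {w phat : ℝ → ℝ} {b C r : ℝ} (hw : Continuous w)
    (hw0 : ∀ ξ, 0 ≤ w ξ) (hphat0 : ∀ ξ, 0 ≤ phat ξ)
    (hint : Integrable fun ξ => w ξ * ((1 - Real.cos (b * ξ)) * phat ξ)) (hbr : |b| * r ≤ π)
    (hC : ∀ ξ, |ξ| ≤ r → C ≤ phat ξ) :
    2 / π ^ 2 * C * b ^ 2 * ∫ ξ in Set.Icc (-r) r, ξ ^ 2 * w ξ
      ≤ ∫ ξ, w ξ * ((1 - Real.cos (b * ξ)) * phat ξ) := by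
  have hnonneg (ξ : ℝ) : 0 ≤ w ξ * ((1 - Real.cos (b * ξ)) * phat ξ) :=
    mul_nonneg (hw0 ξ) (mul_nonneg (sub_nonneg.mpr (Real.cos_le_one _)) (hphat0 ξ))
  rw [← integral_const_mul]
  calc ∫ ξ in Set.Icc (-r) r, 2 / π ^ 2 * C * b ^ 2 * (ξ ^ 2 * w ξ)
      ≤ ∫ ξ in Set.Icc (-r) r, w ξ * ((1 - Real.cos (b * ξ)) * phat ξ) := by
        refine setIntegral_mono_on (Continuous.integrableOn_Icc (by fun_prop)) hint.integrableOn
          measurableSet_Icc fun ξ hξ => ?_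
        have hξ : |ξ| ≤ r := abs_le.mpr hξ
        have hbξ : |b * ξ| ≤ π := by
          rw [abs_mul]; exact (mul_le_mul_of_nonneg_left hξ (abs_nonneg b)).trans hbr
        calc 2 / π ^ 2 * C * b ^ 2 * (ξ ^ 2 * w ξ) = w ξ * (2 / π ^ 2 * (b * ξ) ^ 2 * C) := by
              ring
          _ ≤ _ := mul_le_mul_of_nonneg_left
            (mul_sq_mul_le_one_sub_cos_mul hbξ (hC ξ hξ) (hphat0 ξ)) (hw0 ξ)
    _ ≤ _ := setIntegral_le_integral hint (ae_of_all _ hnonneg)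

theorem correntropy_risk_lower_bound_general (σ M c₀ C₀ b : ℝ)
    (hσ : 0 < σ) (hM : 0 < M)
    (hb : |b| ≤ 2 * M) (p : ℝ → ℝ)
    (hp_int : Integrable p)
    (phat : ℝ → ℝ)
    (hphat : ∀ ξ : ℝ, (phat ξ : ℂ) = ∫ t : ℝ, Complex.exp (-(Complex.I * ξ * t)) * (p t : ℂ))
    (hphat_nonneg : ∀ ξ, 0 ≤ phat ξ)
    (hphat_lb : ∀ ξ, |ξ| ≤ c₀ → C₀ ≤ phat ξ) :
    σ ^ 2 * ∫ t, (Real.exp (-(t ^ 2) / σ ^ 2) - Real.exp (-((t - b) ^ 2) / σ ^ 2)) * p t ≥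
      (σ ^ 3 / Real.pi ^ ((5 : ℝ) / 2) * C₀ *
        ∫ ξ in Set.Icc (-(min c₀ (Real.pi / (2 * M)))) (min c₀ (Real.pi / (2 * M))),
          ξ ^ 2 * Real.exp (-(σ ^ 2 * ξ ^ 2) / 4)) * b ^ 2 := by
  have hbr : |b| * min c₀ (π / (2 * M)) ≤ π :=
    calc |b| * min c₀ (π / (2 * M)) ≤ 2 * M * (π / (2 * M)) :=
          mul_le_mul_of_nonneg hb (min_le_right _ _) (abs_nonneg b) (by positivity)
      _ = π := by field_simp
  have hlower := le_integral_mul_one_sub_cos_mul (by fun_prop) (fun ξ => (Real.exp_pos _).le)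
    hphat_nonneg (integrable_mul_one_sub_cos_mul_fourier (integrable_exp_neg_sq_mul_sq_div_four hσ)
      hp_int hphat b) hbr fun ξ hξ => hphat_lb ξ (hξ.trans (min_le_left _ _))
  have hpow : π ^ ((5 : ℝ) / 2) = √π * π ^ 2 := by
    rw [show (5 : ℝ) / 2 = 1 / 2 + 2 by norm_num, rpow_add pi_pos, ← sqrt_eq_rpow, rpow_two]
  rw [ge_iff_le, integral_gaussian_sub_shift_mul_eq hσ hp_int hphat b, hpow]
  calc _ = σ ^ 2 * (σ / (2 * √π)) * (2 / π ^ 2 * C₀ * b ^ 2 *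
        ∫ ξ in Set.Icc (-(min c₀ (π / (2 * M)))) (min c₀ (π / (2 * M))),
          ξ ^ 2 * Real.exp (-(σ ^ 2 * ξ ^ 2) / 4)) := by
        field_simp
    _ ≤ _ := by
        rw [mul_assoc (σ ^ 2)]
        gcongr

theorem correntropy_risk_lower_bound (σ M c₀ C₀ b : ℝ)
    (hσ : 0 < σ) (hM : 0 < M) (hc₀ : 0 < c₀) (hC₀ : 0 < C₀)
    (hb : |b| ≤ 2 * M) (p : ℝ → ℝ)
    (hp_nonneg : ∀ t, 0 ≤ p t) (hp_int : Integrable p)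
    (hp_prob : ∫ t, p t = 1) (hp_symm : ∀ t, p t = p (-t))
    (phat : ℝ → ℝ)
    (hphat : ∀ ξ : ℝ, (phat ξ : ℂ) = ∫ t : ℝ, Complex.exp (-(Complex.I * ξ * t)) * (p t : ℂ))
    (hphat_nonneg : ∀ ξ, 0 ≤ phat ξ)
    (hphat_lb : ∀ ξ, |ξ| ≤ c₀ → C₀ ≤ phat ξ) :
    σ ^ 2 * ∫ t, (Real.exp (-(t ^ 2) / σ ^ 2) - Real.exp (-((t - b) ^ 2) / σ ^ 2)) * p t ≥
      (σ ^ 3 / Real.pi ^ ((5 : ℝ) / 2) * C₀ *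
        ∫ ξ in Set.Icc (-(min c₀ (Real.pi / (2 * M)))) (min c₀ (Real.pi / (2 * M))),
          ξ ^ 2 * Real.exp (-(σ ^ 2 * ξ ^ 2) / 4)) * b ^ 2 :=
  correntropy_risk_lower_bound_general σ M c₀ C₀ b hσ hM hb p hp_int phat hphat hphat_nonneg
    hphat_lb
end

section
/- Suppose the noise density p is symmetric about 0. Then for any σ > 0 and any b ∈ ℝ, σ² ∫ [exp(-t²/σ²) - exp(-(t-b)²/σ²)] p(t) dt ≤ b². -/
/-!
Symmetrize: since `p` is even, the integral of `g t = exp (-t²/σ²) - exp (-(t-b)²/σ²)` against `p`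
equals half the integral of `g t + g (-t)`. Writing `exp (-(t ∓ b)²/σ²) = exp (-t²/σ²) exp (u±)`
with `u₊ + u₋ = -2b²/σ²`, the bound `exp u ≥ 1 + u` gives `g t + g (-t) ≤ 2b²/σ²` pointwise.
-/

open MeasureTheory

section Symmetrization

variable {G : Type*} [MeasurableSpace G] [AddGroup G] [MeasurableNeg G]
  {μ : Measure G} [μ.IsNegInvariant] {p g : G → ℝ}

theorem integral_mul_eq_integral_comp_neg_mul (hp : ∀ t, p t = p (-t)) :
    ∫ t, g t * p t ∂μ = ∫ t, g (-t) * p t ∂μ := by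
  rw [← integral_neg_eq_self (fun t => g t * p t)]
  simp only [← hp]

theorem integral_mul_le_of_add_comp_neg_le (hp_nonneg : ∀ t, 0 ≤ p t) (hp_int : Integrable p μ)
    (hp_prob : ∫ t, p t ∂μ = 1) (hp_symm : ∀ t, p t = p (-t))
    (hgp : Integrable (fun t => g t * p t) μ) {c : ℝ} (hg : ∀ t, g t + g (-t) ≤ 2 * c) :
    ∫ t, g t * p t ∂μ ≤ c := by
  have hgp_neg : Integrable (fun t => g (-t) * p t) μ := by
    simpa only [neg_neg, ← hp_symm] using hgp.comp_neg
  have hsum : ∫ t, (g t + g (-t)) * p t ∂μ ≤ ∫ t, 2 * c * p t ∂μ :=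
    integral_mono (by simpa only [add_mul, Pi.add_def] using hgp.add hgp_neg) (hp_int.const_mul _)
      fun t => mul_le_mul_of_nonneg_right (hg t) (hp_nonneg t)
  simp only [add_mul] at hsum
  rw [integral_add hgp hgp_neg, ← integral_mul_eq_integral_comp_neg_mul hp_symm,
    integral_const_mul, hp_prob] at hsum
  linarith

end Symmetrization

section GaussianKernel

open Real

variable {s : ℝ}

theorem exp_neg_sq_div_le_one (hs : 0 ≤ s) (x : ℝ) : exp (-x ^ 2 / s) ≤ 1 :=
  exp_le_one_iff.mpr (div_nonpos_of_nonpos_of_nonneg (neg_nonpos.mpr (sq_nonneg x)) hs)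

theorem integrable_exp_neg_sq_sub_div_mul {p : ℝ → ℝ} (hp : Integrable p) (hs : 0 ≤ s) (c : ℝ) :
    Integrable (fun t => exp (-(t - c) ^ 2 / s) * p t) :=
  hp.bdd_mul (c := 1) (by fun_prop) <| .of_forall fun t => by
    rw [norm_of_nonneg (exp_pos _).le]
    exact exp_neg_sq_div_le_one hs _

theorem two_mul_exp_neg_sq_div_sub_le (hs : 0 < s) (t b : ℝ) :
    2 * exp (-t ^ 2 / s) - exp (-(t - b) ^ 2 / s) - exp (-(t + b) ^ 2 / s) ≤ 2 * b ^ 2 / s := by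
  set A := exp (-t ^ 2 / s)
  have hshift : ∀ u, exp (-(t + u) ^ 2 / s) = A * exp ((-2 * t * u - u ^ 2) / s) := fun u => by
    rw [← exp_add]; congr 1; field_simp; ring
  have hlin : ∀ u, A * (1 + (-2 * t * u - u ^ 2) / s) ≤ exp (-(t + u) ^ 2 / s) := fun u => by
    rw [hshift]
    exact mul_le_mul_of_nonneg_left (by linarith [add_one_le_exp ((-2 * t * u - u ^ 2) / s)])
      (exp_pos _).le
  have hb : A * (2 * b ^ 2 / s) ≤ 2 * b ^ 2 / s :=
    mul_le_of_le_one_left (by positivity) (exp_neg_sq_div_le_one hs.le t)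
  have hsum : A * (1 + (-2 * t * -b - (-b) ^ 2) / s) + A * (1 + (-2 * t * b - b ^ 2) / s) =
      2 * A - A * (2 * b ^ 2 / s) := by
    field_simp; ring
  have hminus := hlin (-b)
  rw [← sub_eq_add_neg] at hminus
  linarith [hlin b]

end GaussianKernel

theorem correntropy_risk_upper_bound (σ b : ℝ) (hσ : 0 < σ) (p : ℝ → ℝ)
    (hp_nonneg : ∀ t, 0 ≤ p t) (hp_int : Integrable p)
    (hp_prob : ∫ t, p t = 1) (hp_symm : ∀ t, p t = p (-t)) :
    σ ^ 2 * ∫ t, (Real.exp (-(t ^ 2) / σ ^ 2) - Real.exp (-((t - b) ^ 2) / σ ^ 2)) * p t ≤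
      b ^ 2 := by
  have hs : 0 < σ ^ 2 := by positivity
  have hint : Integrable
      (fun t => (Real.exp (-(t ^ 2) / σ ^ 2) - Real.exp (-((t - b) ^ 2) / σ ^ 2)) * p t) := by
    simpa only [sub_mul, sub_zero, Pi.sub_def] using
      (integrable_exp_neg_sq_sub_div_mul hp_int hs.le 0).sub
        (integrable_exp_neg_sq_sub_div_mul hp_int hs.le b)
  have hbound := integral_mul_le_of_add_comp_neg_le hp_nonneg hp_int hp_prob hp_symm hint
    (c := b ^ 2 / σ ^ 2) fun t => by
      have h := two_mul_exp_neg_sq_div_sub_le hs t b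
      have hneg : (-t - b) ^ 2 = (t + b) ^ 2 := by ring
      rw [neg_sq, hneg]
      linarith [mul_div_assoc 2 (b ^ 2) (σ ^ 2)]
  calc σ ^ 2 * _ ≤ σ ^ 2 * (b ^ 2 / σ ^ 2) := mul_le_mul_of_nonneg_left hbound hs.le
    _ = b ^ 2 := by field_simp
end

section
/- Let g(z) = -σ² exp(-(y-f(x))²/σ²) + σ² exp(-(y-f*(x))²/σ²) for measurable bounded functions f, f*. Then ‖g‖_∞ ≤ 2σ², and for any probability measure ρ on the domain, E[g²] ≤ (2/e)·σ² · E[(f(X) - f*(X))²]. -/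
/-!
`g(x, y) = h (y - f x) - h (y - f* x)` for the loss `h(t) = -σ² exp (-t² / σ²)`. Since `h` takes
values in `[-σ², 0]`, `|g| ≤ σ²`. The derivative `2t exp (-t² / σ²)` of `h` is bounded by
`√(2/e) σ`, so the mean value theorem gives `g² ≤ (2/e) σ² (f x - f* x)²` pointwise; integrate,
using that the right side is bounded, hence integrable.
-/

open MeasureTheory

noncomputable def correntropyLoss (σ t : ℝ) : ℝ :=
  -σ ^ 2 * Real.exp (-t ^ 2 / σ ^ 2)

section CorrentropyLoss

open Real

variable {σ : ℝ}

lemma correntropyLoss_mem_Icc (σ t : ℝ) : correntropyLoss σ t ∈ Set.Icc (-σ ^ 2) 0 := by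
  have h_exp_le_one : exp (-t ^ 2 / σ ^ 2) ≤ 1 :=
    exp_le_one_iff.2 (div_nonpos_of_nonpos_of_nonneg (neg_nonpos.2 (sq_nonneg t)) (sq_nonneg σ))
  constructor <;> unfold correntropyLoss <;> nlinarith [exp_pos (-t ^ 2 / σ ^ 2), sq_nonneg σ]

lemma abs_correntropyLoss_sub_le (σ a b : ℝ) :
    |correntropyLoss σ a - correntropyLoss σ b| ≤ σ ^ 2 := by
  simpa [Real.dist_eq] using Real.dist_le_of_mem_Icc (correntropyLoss_mem_Icc σ a) (correntropyLoss_mem_Icc σ b)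

lemma hasDerivAt_correntropyLoss (hσ : σ ≠ 0) (t : ℝ) :
    HasDerivAt (correntropyLoss σ) (2 * t * exp (-t ^ 2 / σ ^ 2)) t := by
  have h_inner : HasDerivAt (fun t : ℝ => -t ^ 2 / σ ^ 2) (-(2 * t) / σ ^ 2) t := by
    simpa using ((hasDerivAt_pow 2 t).neg).div_const (σ ^ 2)
  refine (h_inner.exp.const_mul (-σ ^ 2)).congr_deriv ?_
  field_simp

/-- With `u = 2t²/σ²` the square of the derivative is `2σ² · u e⁻ᵘ`, and `u e⁻ᵘ ≤ e⁻¹`. -/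
lemma sq_deriv_correntropyLoss_le (hσ : σ ≠ 0) (t : ℝ) :
    (2 * t * exp (-t ^ 2 / σ ^ 2)) ^ 2 ≤ 2 / exp 1 * σ ^ 2 := by
  calc (2 * t * exp (-t ^ 2 / σ ^ 2)) ^ 2
      = 2 * σ ^ 2 * (2 * t ^ 2 / σ ^ 2 * exp (-(2 * t ^ 2 / σ ^ 2))) := by
        rw [mul_pow, ← exp_nat_mul]
        field_simp
        ring_nf
    _ ≤ 2 * σ ^ 2 * exp (-1) := by
        gcongr
        exact mul_exp_neg_le_exp_neg_one _
    _ = 2 / exp 1 * σ ^ 2 := by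
        rw [exp_neg]
        ring

lemma abs_correntropyLoss_sub_le_mul (hσ : σ ≠ 0) (a b : ℝ) :
    |correntropyLoss σ a - correntropyLoss σ b| ≤ √(2 / exp 1 * σ ^ 2) * |a - b| := by
  simpa only [Real.norm_eq_abs] using convex_univ.norm_image_sub_le_of_norm_hasDerivWithin_le
    (fun t _ => (hasDerivAt_correntropyLoss hσ t).hasDerivWithinAt)
    (fun t _ => abs_le_sqrt (sq_deriv_correntropyLoss_le hσ t)) (Set.mem_univ b) (Set.mem_univ a)

lemma sq_correntropyLoss_sub_le (hσ : σ ≠ 0) (a b : ℝ) :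
    (correntropyLoss σ a - correntropyLoss σ b) ^ 2 ≤ 2 / exp 1 * σ ^ 2 * (a - b) ^ 2 := by
  calc (correntropyLoss σ a - correntropyLoss σ b) ^ 2
      ≤ (√(2 / exp 1 * σ ^ 2) * |a - b|) ^ 2 := by
        rw [← sq_abs]
        exact pow_le_pow_left₀ (abs_nonneg _) (abs_correntropyLoss_sub_le_mul hσ a b) 2
    _ = 2 / exp 1 * σ ^ 2 * (a - b) ^ 2 := by
        rw [mul_pow, sq_sqrt (by positivity), sq_abs]

end CorrentropyLoss

lemma integrable_sq_sub_of_bounded {α : Type*} [MeasurableSpace α] {μ : Measure α}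
    [IsFiniteMeasure μ] {u v : α → ℝ} (hu : Measurable u) (hv : Measurable v) {Cu Cv : ℝ}
    (hCu : ∀ x, |u x| ≤ Cu) (hCv : ∀ x, |v x| ≤ Cv) :
    Integrable (fun x => (u x - v x) ^ 2) μ := by
  refine Integrable.of_bound ((hu.sub hv).pow_const 2).aestronglyMeasurable ((Cu + Cv) ^ 2)
    (ae_of_all _ fun x => ?_)
  rw [norm_pow, Real.norm_eq_abs]
  exact pow_le_pow_left₀ (abs_nonneg _) ((abs_sub _ _).trans (add_le_add (hCu x) (hCv x))) 2

theorem g_bound_and_variance {𝒳 : Type*} [MeasurableSpace 𝒳]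
    (σ : ℝ) (hσ : 0 < σ) (f fstar : 𝒳 → ℝ)
    (hf_meas : Measurable f) (hfstar_meas : Measurable fstar)
    (hf_bdd : ∃ C, ∀ x, |f x| ≤ C) (hfstar_bdd : ∃ C, ∀ x, |fstar x| ≤ C)
    (ρ : Measure (𝒳 × ℝ)) [IsProbabilityMeasure ρ] :
    (∀ z : 𝒳 × ℝ,
      |(-σ ^ 2 * Real.exp (-((z.2 - f z.1) ^ 2) / σ ^ 2) +
          σ ^ 2 * Real.exp (-((z.2 - fstar z.1) ^ 2) / σ ^ 2))| ≤ 2 * σ ^ 2) ∧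
    (∫ z, (-σ ^ 2 * Real.exp (-((z.2 - f z.1) ^ 2) / σ ^ 2) +
        σ ^ 2 * Real.exp (-((z.2 - fstar z.1) ^ 2) / σ ^ 2)) ^ 2 ∂ρ ≤
      (2 / Real.exp 1) * σ ^ 2 * ∫ z, (f z.1 - fstar z.1) ^ 2 ∂ρ) := by
  have hg : ∀ z : 𝒳 × ℝ, -σ ^ 2 * Real.exp (-((z.2 - f z.1) ^ 2) / σ ^ 2) +
      σ ^ 2 * Real.exp (-((z.2 - fstar z.1) ^ 2) / σ ^ 2) =
      correntropyLoss σ (z.2 - f z.1) - correntropyLoss σ (z.2 - fstar z.1) := fun z => by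
    unfold correntropyLoss
    ring
  simp only [hg]
  obtain ⟨C, hC⟩ := hf_bdd
  obtain ⟨Cstar, hCstar⟩ := hfstar_bdd
  refine ⟨fun z => (abs_correntropyLoss_sub_le σ _ _).trans (by linarith [sq_nonneg σ]), ?_⟩
  have h_int : Integrable (fun z : 𝒳 × ℝ => (f z.1 - fstar z.1) ^ 2) ρ :=
    integrable_sq_sub_of_bounded (hf_meas.comp measurable_fst)
      (hfstar_meas.comp measurable_fst) (fun z => hC z.1) (fun z => hCstar z.1)
  calc _ ≤ ∫ z, 2 / Real.exp 1 * σ ^ 2 * (f z.1 - fstar z.1) ^ 2 ∂ρ := by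
        refine integral_mono_of_nonneg (ae_of_all _ fun _ => sq_nonneg _) (h_int.const_mul _)
          (ae_of_all _ fun z => ?_)
        simpa only [sub_sub_sub_cancel_left, sub_sq_comm (fstar z.1)]
          using sq_correntropyLoss_sub_le hσ.ne' (z.2 - f z.1) (z.2 - fstar z.1)
    _ = _ := integral_const_mul _ _
end
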